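/- arXiv:1507.01448 — 15 statements merged into one kernel-verified Lean document; each statement's English description precedes it below -/
import Mathlib

section
/- Let L be an R₀-algebra and let F be a filter of L. Then F is a fated filter of L if and only if for all x, y, z ∈ L, x→(y→z) ∈ F and x→y ∈ F together imply x→z ∈ F. -/
open scoped Classical

/-- An R₀-algebra: a bounded distributive lattice with an order-reversing
involution `neg` and a binary operation `imp` satisfying (R1)–(R6). -/
class R0Algebra (L : Type*) extends DistribLattice L, BoundedOrder L where
  neg : L → L
  imp : L → L → L
  neg_antitone : ∀ {x y : L}, x ≤ y → neg y ≤ neg x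
  neg_neg : ∀ x : L, neg (neg x) = x
  R1 : ∀ x y : L, imp x y = imp (neg y) (neg x)
  R2 : ∀ x : L, imp ⊤ x = x
  R3 : ∀ x y z : L, (imp y z) ⊓ (imp (imp x y) (imp x z)) = imp y z
  R4 : ∀ x y z : L, imp x (imp y z) = imp y (imp x z)
  R5 : ∀ x y z : L, imp x (y ⊔ z) = (imp x y) ⊔ (imp x z)
  R6 : ∀ x y : L, (imp x y) ⊔ (imp (imp x y) ((neg x) ⊔ y)) = ⊤

namespace R0Algebra

variable {L : Type*} [R0Algebra L]

/-- A filter of an R₀-algebra: `1 ∈ F` and `x ∈ F`, `x→y ∈ F` imply `y ∈ F`. -/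
def IsFilter (F : Set L) : Prop :=
  ⊤ ∈ F ∧ ∀ x ∈ F, ∀ y : L, imp x y ∈ F → y ∈ F

/-- A fated filter of an R₀-algebra: `1 ∈ F` and for all `x,y` and `a ∈ F`,
`a→((x→y)→x) ∈ F` implies `x ∈ F`. -/
def IsFatedFilter (F : Set L) : Prop :=
  ⊤ ∈ F ∧ ∀ x y : L, ∀ a ∈ F, imp a (imp (imp x y) x) ∈ F → x ∈ F

/-- An (∈,∈∨q_k)-fuzzy fated filter. -/
def IsFuzzyFatedFilterQk (μ : L → ℝ) (k : ℝ) : Prop :=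
  (∀ (x : L) (t : ℝ), t ∈ Set.Ioc (0 : ℝ) 1 → t ≤ μ x →
      (t ≤ μ (⊤ : L) ∨ 1 < μ (⊤ : L) + t + k)) ∧
  (∀ (x a y : L) (t s : ℝ), t ∈ Set.Ioc (0 : ℝ) 1 → s ∈ Set.Ioc (0 : ℝ) 1 →
      t ≤ μ (imp a (imp (imp x y) x)) → s ≤ μ a →
      (min t s ≤ μ x ∨ 1 < μ x + min t s + k))

/-- An (∈,∈)-fuzzy fated filter. -/
def IsFuzzyFatedFilterIn (μ : L → ℝ) : Prop :=
  (∀ (x : L) (t : ℝ), t ∈ Set.Ioc (0 : ℝ) 1 → t ≤ μ x → t ≤ μ (⊤ : L)) ∧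
  (∀ (x a y : L) (t s : ℝ), t ∈ Set.Ioc (0 : ℝ) 1 → s ∈ Set.Ioc (0 : ℝ) 1 →
      t ≤ μ (imp a (imp (imp x y) x)) → s ≤ μ a → min t s ≤ μ x)

/-- A strong (∈,∈∨q_k)-fuzzy fated filter: condition (2) together with
`μ(1) ≥ μ(x)` for all `x`. -/
def IsStrongFuzzyFatedFilterQk (μ : L → ℝ) (k : ℝ) : Prop :=
  (∀ x : L, μ x ≤ μ (⊤ : L)) ∧
  (∀ (x a y : L) (t s : ℝ), t ∈ Set.Ioc (0 : ℝ) 1 → s ∈ Set.Ioc (0 : ℝ) 1 →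
      t ≤ μ (imp a (imp (imp x y) x)) → s ≤ μ a →
      (min t s ≤ μ x ∨ 1 < μ x + min t s + k))

end R0Algebra

namespace R0Algebra

variable {L : Type*} [R0Algebra L]

lemma neg_bot' : neg (⊥ : L) = ⊤ := by
  have h : neg (neg (⊤ : L)) ≤ neg ⊥ := neg_antitone bot_le
  rw [neg_neg] at h
  exact le_antisymm le_top h

lemma neg_top' : neg (⊤ : L) = ⊥ := by
  have h : neg (⊤ : L) ≤ neg (neg ⊥) := neg_antitone (le_top : neg (⊥:L) ≤ ⊤)
  rw [neg_neg] at h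
  exact le_antisymm h bot_le

lemma demorgan_sup (x y : L) : neg (x ⊔ y) = neg x ⊓ neg y := by
  apply le_antisymm
  · exact le_inf (neg_antitone le_sup_left) (neg_antitone le_sup_right)
  · have hx : x ≤ neg (neg x ⊓ neg y) := by
      have := neg_antitone (inf_le_left : neg x ⊓ neg y ≤ neg x)
      rwa [neg_neg] at this
    have hy : y ≤ neg (neg x ⊓ neg y) := by
      have := neg_antitone (inf_le_right : neg x ⊓ neg y ≤ neg y)
      rwa [neg_neg] at this
    have := neg_antitone (sup_le hx hy)
    rwa [neg_neg] at this

lemma demorgan_inf (x y : L) : neg (x ⊓ y) = neg x ⊔ neg y := by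
  have h := demorgan_sup (neg x) (neg y)
  rw [neg_neg, neg_neg] at h
  rw [← h, neg_neg]

lemma inf_imp (y z x : L) : imp (y ⊓ z) x = imp y x ⊔ imp z x := by
  rw [R1 (y ⊓ z) x, demorgan_inf, R5, ← R1, ← R1]

lemma imp_top (x : L) : imp x (⊤ : L) = ⊤ := by
  have h := inf_imp x (⊤ : L) (⊤ : L)
  rw [inf_top_eq, R2] at h
  rw [h, sup_top_eq]

lemma self_le_imp (x z : L) : z ≤ imp x z := by
  have h := R3 x (⊤ : L) z
  rw [R2, imp_top, R2] at h
  exact inf_eq_left.mp h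

lemma imp_le_imp_right (x : L) {y z : L} (h : y ≤ z) : imp x y ≤ imp x z := by
  have hz : imp x z = imp x (y ⊔ z) := by rw [sup_eq_right.mpr h]
  rw [hz, R5]
  exact le_sup_left

lemma imp_le_imp_left (x : L) {y z : L} (h : y ≤ z) : imp z x ≤ imp y x := by
  have hy : imp y x = imp (y ⊓ z) x := by rw [inf_eq_left.mpr h]
  rw [hy, inf_imp]
  exact le_sup_right

lemma sup_imp_self (x : L) : x ⊔ imp x x = ⊤ := by
  have h := R6 (⊤ : L) x
  rwa [R2, neg_top', bot_sup_eq] at h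

lemma imp_self (x : L) : imp x x = ⊤ := by
  have hx : x ≤ imp x x := self_le_imp x x
  have hbot : neg (imp x x) = ⊥ := by
    have h1 : neg (imp x x) ≤ neg x ⊓ neg (imp x x) :=
      le_inf (neg_antitone hx) le_rfl
    have h2 : neg x ⊓ neg (imp x x) = ⊥ := by
      rw [← demorgan_sup, sup_imp_self, neg_top']
    exact le_bot_iff.mp (h2 ▸ h1)
  have := congrArg neg hbot
  rwa [neg_neg, neg_bot'] at this

lemma imp_bot (x : L) : imp x (⊥ : L) = neg x := by
  rw [R1, neg_bot', R2]

lemma le_iff_imp {x y : L} : x ≤ y ↔ imp x y = ⊤ := by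
  constructor
  · intro h
    have := imp_le_imp_right x h
    rw [imp_self] at this
    exact le_antisymm le_top this
  · intro h
    have h3 := R3 x y (⊥ : L)
    rw [h, R2, imp_bot, imp_bot] at h3
    have hle : neg y ≤ neg x := inf_eq_left.mp h3
    have := neg_antitone hle
    rwa [neg_neg, neg_neg] at this

lemma exchange {a b c : L} (h : a ≤ imp b c) : b ≤ imp a c := by
  apply le_iff_imp.mpr
  rw [← R4]
  exact le_iff_imp.mp h

lemma mem_of_le {F : Set L} (hF : IsFilter F) {a b : L} (ha : a ∈ F)
    (h : a ≤ b) : b ∈ F :=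
  hF.2 a ha b (by rw [le_iff_imp.mp h]; exact hF.1)

end R0Algebra

open R0Algebra

theorem stmt_0 {L : Type*} [R0Algebra L] (F : Set L) (hF : IsFilter F) :
    IsFatedFilter F ↔
      ∀ x y z : L, imp x (imp y z) ∈ F → imp x y ∈ F → imp x z ∈ F := by
  constructor
  · intro hFated x y z h1 h2
    have h1' : imp y (imp x z) ∈ F := by rw [← R4]; exact h1
    have hR3 : imp y (imp x z) ≤ imp (imp x y) (imp x (imp x z)) :=
      inf_eq_left.mp (R3 x y (imp x z))
    have h3 : imp (imp x y) (imp x (imp x z)) ∈ F := mem_of_le hF h1' hR3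
    have h4 : imp x (imp x z) ∈ F := hF.2 _ h2 _ h3
    have ha : imp (imp x z) z ≤ imp (imp x (imp x z)) (imp x z) :=
      inf_eq_left.mp (R3 x (imp x z) z)
    have h5 : imp x (imp x z) ≤ imp (imp (imp x z) z) (imp x z) := exchange ha
    have h6 : imp (imp (imp x z) z) (imp x z) ∈ F := mem_of_le hF h4 h5
    exact hFated.2 (imp x z) z ⊤ hF.1 (by rw [R2]; exact h6)
  · intro hprop
    refine ⟨hF.1, fun x y a haF h => ?_⟩
    have hw : imp (imp x y) x ∈ F := hF.2 a haF _ h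
    have hv : imp (neg x) x ∈ F := by
      apply mem_of_le hF hw
      apply imp_le_imp_left
      calc neg x = imp x ⊥ := (imp_bot x).symm
        _ ≤ imp x y := imp_le_imp_right x bot_le
    have h1 : imp (neg x) (imp x ⊥) ∈ F := by
      have he : imp (neg x) (imp x ⊥) = ⊤ := by rw [imp_bot]; exact imp_self _
      rw [he]; exact hF.1
    have h2 : imp (neg x) (⊥ : L) ∈ F := hprop (neg x) x ⊥ h1 hv
    have he2 : imp (neg x) (⊥ : L) = x := by rw [imp_bot, R0Algebra.neg_neg]
    rwa [he2] at h2
end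

section
/- Let L be an R₀-algebra, k ∈ [0,1), and μ a fuzzy subset of L. Then μ is an (∈,∈∨q_k)-fuzzy fated filter of L if and only if both of the following hold: (1) for all x ∈ L, μ(1) ≥ min{μ(x), (1−k)/2}; (2) for all x, a, y ∈ L, μ(x) ≥ min{μ(a→((x→y)→x)), μ(a), (1−k)/2}. -/
open scoped Classical

open R0Algebra

theorem stmt_4 {L : Type*} [R0Algebra L] (k : ℝ) (hk0 : 0 ≤ k) (hk1 : k < 1)
    (μ : L → ℝ) (hμ0 : ∀ x, 0 ≤ μ x) (hμ1 : ∀ x, μ x ≤ 1) :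
    IsFuzzyFatedFilterQk μ k ↔
      ((∀ x : L, min (μ x) ((1 - k) / 2) ≤ μ (⊤ : L)) ∧
        (∀ x a y : L,
          min (min (μ (imp a (imp (imp x y) x))) (μ a)) ((1 - k) / 2) ≤ μ x)) := by
  constructor
  · rintro ⟨h1, h2⟩
    constructor
    · intro x
      set m := min (μ x) ((1 - k) / 2) with hm
      have hmk : m ≤ (1 - k) / 2 := min_le_right _ _
      have hnn : (0:ℝ) ≤ m := le_min (hμ0 x) (by linarith)
      rcases eq_or_lt_of_le hnn with h0 | h0
      · rw [← h0]; exact hμ0 ⊤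
      · have hm1 : m ≤ 1 := by linarith
        rcases h1 x m ⟨h0, hm1⟩ (min_le_left _ _) with h | h
        · exact h
        · linarith
    · intro x a y
      set m := min (min (μ (imp a (imp (imp x y) x))) (μ a)) ((1 - k) / 2) with hm
      have hmk : m ≤ (1 - k) / 2 := min_le_right _ _
      have hnn : (0:ℝ) ≤ m := le_min (le_min (hμ0 _) (hμ0 _)) (by linarith)
      rcases eq_or_lt_of_le hnn with h0 | h0
      · rw [← h0]; exact hμ0 x
      · have hm1 : m ≤ 1 := by linarith
        have ht : m ≤ μ (imp a (imp (imp x y) x)) :=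
          le_trans (min_le_left _ _) (min_le_left _ _)
        have hs : m ≤ μ a := le_trans (min_le_left _ _) (min_le_right _ _)
        have := h2 x a y m m ⟨h0, hm1⟩ ⟨h0, hm1⟩ ht hs
        rw [min_self] at this
        rcases this with h | h
        · exact h
        · linarith
  · rintro ⟨h1, h2⟩
    constructor
    · intro x t ht htx
      rcases le_or_gt t ((1 - k) / 2) with h | h
      · left
        calc t = min t ((1 - k) / 2) := (min_eq_left h).symm
          _ ≤ min (μ x) ((1 - k) / 2) := min_le_min htx le_rfl
          _ ≤ μ ⊤ := h1 x
      · right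
        have hx : (1 - k) / 2 ≤ μ x := by linarith
        have : min (μ x) ((1 - k) / 2) = (1 - k) / 2 := min_eq_right hx
        have := h1 x
        rw [min_eq_right hx] at this
        linarith
    · intro x a y t s ht hs ht2 hs2
      set m := min t s with hm
      have hmt : m ≤ t := min_le_left _ _
      have hms : m ≤ s := min_le_right _ _
      rcases le_or_gt m ((1 - k) / 2) with h | h
      · left
        calc m = min m ((1 - k) / 2) := (min_eq_left h).symm
          _ ≤ min (min (μ (imp a (imp (imp x y) x))) (μ a)) ((1 - k) / 2) :=
            min_le_min (le_min (le_trans hmt ht2) (le_trans hms hs2)) le_rfl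
          _ ≤ μ x := h2 x a y
      · right
        have hx1 : (1 - k) / 2 ≤ μ (imp a (imp (imp x y) x)) := le_trans h.le (le_trans hmt ht2)
        have hx2 : (1 - k) / 2 ≤ μ a := le_trans h.le (le_trans hms hs2)
        have := h2 x a y
        rw [min_eq_right (le_min hx1 hx2)] at this
        linarith
end

section
/- Let L be an R₀-algebra and k ∈ [0,1). If μ is an (∈,∈∨q_k)-fuzzy fated filter of L with μ(1) < (1−k)/2, then μ is an (∈,∈)-fuzzy fated filter of L. -/
open scoped Classical

open R0Algebra

theorem stmt_5 {L : Type*} [R0Algebra L] (k : ℝ) (hk0 : 0 ≤ k) (hk1 : k < 1)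
    (μ : L → ℝ) (hμ0 : ∀ x, 0 ≤ μ x) (hμ1 : ∀ x, μ x ≤ 1)
    (h : IsFuzzyFatedFilterQk μ k) (htop : μ (⊤ : L) < (1 - k) / 2) :
    IsFuzzyFatedFilterIn μ := by
  obtain ⟨h1, h2⟩ := h
  have hhalf : (0:ℝ) < (1 - k) / 2 := by linarith
  have hhalf1 : (1 - k) / 2 ≤ 1 := by linarith
  -- every value of μ is below (1-k)/2
  have hsmall : ∀ x : L, μ x < (1 - k) / 2 := by
    intro x
    by_contra hc
    push_neg at hc
    rcases h1 x ((1 - k) / 2) ⟨hhalf, hhalf1⟩ hc with h' | h'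
    · linarith
    · linarith
  constructor
  · intro x t ht htx
    rcases h1 x t ht htx with h' | h'
    · exact h'
    · have := hsmall x
      linarith
  · intro x a y t s ht hs h1' h2'
    rcases h2 x a y t s ht hs h1' h2' with h' | h'
    · exact h'
    · have hx := hsmall x
      have h3 := hsmall (imp a (imp (imp x y) x))
      have h4 := hsmall a
      have : min t s < (1 - k) / 2 := lt_of_le_of_lt (min_le_left _ _) (lt_of_le_of_lt h1' h3)
      linarith
end

section
/- Let L be an R₀-algebra and μ a fuzzy subset of L. Then μ is an (∈,∈∨q)-fuzzy fated filter of L (i.e. the case k = 0) if and only if both of the following hold: (1) for all x ∈ L, μ(1) ≥ min{μ(x), 0.5}; (2) for all x, a, y ∈ L, μ(x) ≥ min{μ(a→((x→y)→x)), μ(a), 0.5}. -/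
open scoped Classical

open R0Algebra

theorem stmt_6 {L : Type*} [R0Algebra L]
    (μ : L → ℝ) (hμ0 : ∀ x, 0 ≤ μ x) (hμ1 : ∀ x, μ x ≤ 1) :
    IsFuzzyFatedFilterQk μ 0 ↔
      ((∀ x : L, min (μ x) (0.5 : ℝ) ≤ μ (⊤ : L)) ∧
        (∀ x a y : L,
          min (min (μ (imp a (imp (imp x y) x))) (μ a)) (0.5 : ℝ) ≤ μ x)) := by
  constructor
  · rintro ⟨h1, h2⟩
    constructor
    · intro x
      set c := min (μ x) (0.5 : ℝ) with hc
      rcases le_or_gt c 0 with h | h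
      · exact h.trans (hμ0 _)
      · have hmem : c ∈ Set.Ioc (0 : ℝ) 1 := ⟨h, (min_le_right _ _).trans (by norm_num)⟩
        rcases h1 x c hmem (min_le_left _ _) with h' | h'
        · exact h'
        · have : (0.5 : ℝ) < μ ⊤ := by
            have := min_le_right (μ x) (0.5 : ℝ)
            linarith
          linarith [min_le_right (μ x) (0.5 : ℝ)]
    · intro x a y
      set c := min (min (μ (imp a (imp (imp x y) x))) (μ a)) (0.5 : ℝ) with hc
      rcases le_or_gt c 0 with h | h
      · exact h.trans (hμ0 _)
      · have hmem : c ∈ Set.Ioc (0 : ℝ) 1 := ⟨h, (min_le_right _ _).trans (by norm_num)⟩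
        have ht : c ≤ μ (imp a (imp (imp x y) x)) :=
          (min_le_left _ _).trans (min_le_left _ _)
        have hs : c ≤ μ a := (min_le_left _ _).trans (min_le_right _ _)
        rcases h2 x a y c c hmem hmem ht hs with h' | h'
        · simpa using h'
        · have hc5 : c ≤ (0.5 : ℝ) := min_le_right _ _
          rw [min_self] at h'
          linarith
  · rintro ⟨h1, h2⟩
    constructor
    · intro x t ht htx
      rcases le_or_gt t (0.5 : ℝ) with h | h
      · left
        exact le_trans (le_min htx h) (h1 x)
      · right
        have : (0.5 : ℝ) ≤ μ ⊤ := le_trans (le_min (by linarith) le_rfl) (h1 x)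
        linarith
    · intro x a y t s ht hs htA hsa
      set m := min t s with hm
      have hmt : m ≤ t := min_le_left _ _
      have hms : m ≤ s := min_le_right _ _
      rcases le_or_gt m (0.5 : ℝ) with h | h
      · left
        exact le_trans (le_min (le_min (hmt.trans htA) (hms.trans hsa)) h) (h2 x a y)
      · right
        have : (0.5 : ℝ) ≤ μ x :=
          le_trans (le_min (le_min (by linarith) (by linarith)) le_rfl) (h2 x a y)
        linarith
end

section
/- Let L be an R₀-algebra and k ∈ [0,1). Every strong (∈,∈∨q_k)-fuzzy fated filter μ of L satisfies: (1) for all x ∈ L, μ(1) ≥ min{μ(x), (1−k)/2}; (2) for all x, a, y ∈ L, μ(x) ≥ min{μ(a→((x→y)→x)), μ(a), (1−k)/2}. -/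
open scoped Classical

open R0Algebra

theorem stmt_7 {L : Type*} [R0Algebra L] (k : ℝ) (hk0 : 0 ≤ k) (hk1 : k < 1)
    (μ : L → ℝ) (hμ0 : ∀ x, 0 ≤ μ x) (hμ1 : ∀ x, μ x ≤ 1)
    (h : IsStrongFuzzyFatedFilterQk μ k) :
    (∀ x : L, min (μ x) ((1 - k) / 2) ≤ μ (⊤ : L)) ∧
      (∀ x a y : L,
        min (min (μ (imp a (imp (imp x y) x))) (μ a)) ((1 - k) / 2) ≤ μ x) := by
  obtain ⟨h1, h2⟩ := h
  refine ⟨fun x => le_trans (min_le_left _ _) (h1 x), fun x a y => ?_⟩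
  set m := min (min (μ (imp a (imp (imp x y) x))) (μ a)) ((1 - k) / 2) with hm
  rcases le_or_gt m 0 with hm0 | hm0
  · exact hm0.trans (hμ0 x)
  · have hmk : m ≤ (1 - k) / 2 := min_le_right _ _
    have hm1 : m ≤ 1 := hmk.trans (by linarith)
    have ht : m ≤ μ (imp a (imp (imp x y) x)) :=
      le_trans (min_le_left _ _) (min_le_left _ _)
    have hs : m ≤ μ a := le_trans (min_le_left _ _) (min_le_right _ _)
    have := h2 x a y m m ⟨hm0, hm1⟩ ⟨hm0, hm1⟩ ht hs
    rcases this with h' | h'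
    · simpa using h'
    · simp only [min_self] at h'
      linarith
end

section
/- Let L be an R₀-algebra, k ∈ [0,1), and μ a fuzzy subset of L. Then μ is an (∈,∈∨q_k)-fuzzy fated filter of L if and only if for every t ∈ (0, (1−k)/2], the level set U(μ;t) is either empty or a fated filter of L. -/
open scoped Classical

open R0Algebra

theorem stmt_8 {L : Type*} [R0Algebra L] (k : ℝ) (hk0 : 0 ≤ k) (hk1 : k < 1)
    (μ : L → ℝ) (hμ0 : ∀ x, 0 ≤ μ x) (hμ1 : ∀ x, μ x ≤ 1) :
    IsFuzzyFatedFilterQk μ k ↔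
      ∀ t ∈ Set.Ioc (0 : ℝ) ((1 - k) / 2),
        {x : L | t ≤ μ x} = ∅ ∨ IsFatedFilter {x : L | t ≤ μ x} := by

  constructor
  · rintro ⟨h1, h2⟩ t ⟨ht0, ht2⟩
    by_cases hne : {x : L | t ≤ μ x} = ∅
    · exact Or.inl hne
    right
    have ht1 : t ≤ 1 := ht2.trans (by linarith)
    have key : ∀ x : L, 1 < μ x + t + k → t ≤ μ x := by
      intro x hx; linarith
    constructor
    · obtain ⟨x, hx⟩ := Set.nonempty_iff_ne_empty.mpr hne
      rcases h1 x t ⟨ht0, ht1⟩ hx with h | h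
      · exact h
      · exact key _ h
    · intro x y a ha hterm
      rcases h2 x a y t t ⟨ht0, ht1⟩ ⟨ht0, ht1⟩ hterm ha with h | h
      · simpa using h
      · exact key _ (by simpa using h)
  · intro h
    have hhalf : 0 < (1 - k) / 2 := by linarith
    constructor
    · intro x t ⟨ht0, ht1⟩ hx
      by_contra hcon
      push_neg at hcon
      obtain ⟨hc1, hc2⟩ := hcon
      set r := min t ((1 - k) / 2) with hr
      have hr0 : 0 < r := lt_min ht0 hhalf
      have hr2 : r ≤ (1 - k) / 2 := min_le_right _ _
      have hxm : x ∈ {z : L | r ≤ μ z} := le_trans (min_le_left _ _) hx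
      rcases h r ⟨hr0, hr2⟩ with he | hf
      · exact absurd he (Set.nonempty_iff_ne_empty.mp ⟨x, hxm⟩)
      · have htop : r ≤ μ ⊤ := hf.1
        rcases le_or_gt t ((1 - k) / 2) with hc | hc
        · have hre : r = t := min_eq_left hc
          linarith
        · have hre : r = (1 - k) / 2 := min_eq_right hc.le
          linarith
    · intro x a y t s ⟨ht0, ht1⟩ ⟨hs0, hs1⟩ hterm ha
      by_contra hcon
      push_neg at hcon
      obtain ⟨hc1, hc2⟩ := hcon
      set m := min t s with hm
      set r := min m ((1 - k) / 2) with hr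
      have hm0 : 0 < m := lt_min ht0 hs0
      have hr0 : 0 < r := lt_min hm0 hhalf
      have hr2 : r ≤ (1 - k) / 2 := min_le_right _ _
      have hrt : r ≤ t := le_trans (min_le_left _ _) (min_le_left _ _)
      have hrs : r ≤ s := le_trans (min_le_left _ _) (min_le_right _ _)
      have hamem : a ∈ {z : L | r ≤ μ z} := hrs.trans ha
      have htmem : imp a (imp (imp x y) x) ∈ {z : L | r ≤ μ z} := hrt.trans hterm
      rcases h r ⟨hr0, hr2⟩ with he | hf
      · exact absurd he (Set.nonempty_iff_ne_empty.mp ⟨a, hamem⟩)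
      · have hxr : r ≤ μ x := hf.2 x y a hamem htmem
        rcases le_or_gt m ((1 - k) / 2) with hc | hc
        · have hre : r = m := min_eq_left hc
          linarith
        · have hre : r = (1 - k) / 2 := min_eq_right hc.le
          linarith
end

section
/- Let L be an R₀-algebra and μ a fuzzy subset of L. Then μ is an (∈,∈∨q)-fuzzy fated filter of L (i.e. the case k = 0) if and only if for every t ∈ (0, 0.5], the level set U(μ;t) is either empty or a fated filter of L. -/
open scoped Classical

open R0Algebra

theorem stmt_9 {L : Type*} [R0Algebra L]
    (μ : L → ℝ) (hμ0 : ∀ x, 0 ≤ μ x) (hμ1 : ∀ x, μ x ≤ 1) :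
    IsFuzzyFatedFilterQk μ 0 ↔
      ∀ t ∈ Set.Ioc (0 : ℝ) (0.5 : ℝ),
        {x : L | t ≤ μ x} = ∅ ∨ IsFatedFilter {x : L | t ≤ μ x} := by
  constructor
  · rintro ⟨h1, h2⟩ t ⟨ht0, ht5⟩
    by_cases hne : {x : L | t ≤ μ x} = ∅
    · exact Or.inl hne
    right
    obtain ⟨x0, hx0⟩ := Set.nonempty_iff_ne_empty.2 hne
    have ht1 : t ∈ Set.Ioc (0 : ℝ) 1 := ⟨ht0, le_trans ht5 (by norm_num)⟩
    constructor
    · rcases h1 x0 t ht1 hx0 with h | h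
      · exact h
      · have : 1 - t < μ ⊤ := by linarith
        exact le_trans (by linarith) this.le
    · intro x y a ha hax
      rcases h2 x a y t t ht1 ht1 hax ha with h | h
      · simpa using h
      · simp only [min_self] at h
        show t ≤ μ x
        linarith
  · rintro h
    constructor
    · intro x t ht hx
      have h5 : min t 0.5 ∈ Set.Ioc (0 : ℝ) (0.5 : ℝ) :=
        ⟨lt_min ht.1 (by norm_num), min_le_right _ _⟩
      rcases h _ h5 with he | hf
      · exfalso
        have : x ∈ {y : L | min t 0.5 ≤ μ y} := le_trans (min_le_left _ _) hx
        rw [he] at this; exact this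
      · have htop : min t 0.5 ≤ μ ⊤ := hf.1
        rcases le_or_gt t 0.5 with hc | hc
        · left; simpa [min_eq_left hc] using htop
        · right
          have : (0.5 : ℝ) ≤ μ ⊤ := by simpa [min_eq_right hc.le] using htop
          linarith
    · intro x a y t s ht hs hax ha
      set r := min t s with hr
      have h5 : min r 0.5 ∈ Set.Ioc (0 : ℝ) (0.5 : ℝ) :=
        ⟨lt_min (lt_min ht.1 hs.1) (by norm_num), min_le_right _ _⟩
      rcases h _ h5 with he | hf
      · exfalso
        have : a ∈ {y : L | min r 0.5 ≤ μ y} :=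
          le_trans (le_trans (min_le_left _ _) (min_le_right _ _)) ha
        rw [he] at this; exact this
      · have hxmem : x ∈ {y : L | min r 0.5 ≤ μ y} := by
          refine hf.2 x y a ?_ ?_
          · exact le_trans (le_trans (min_le_left _ _) (min_le_right _ _)) ha
          · exact le_trans (le_trans (min_le_left _ _) (min_le_left _ _)) hax
        rcases le_or_gt r 0.5 with hc | hc
        · left; simpa [min_eq_left hc] using hxmem
        · right
          have : (0.5 : ℝ) ≤ μ x := by simpa [min_eq_right hc.le] using hxmem
          linarith
end

section
/- Let L be an R₀-algebra and k ∈ [0,1). Every (∈,∈∨q_k)-fuzzy fated filter μ of L satisfies μ(x→z) ≥ min{μ(x→(y→z)), μ(x→y), (1−k)/2} for all x, y, z ∈ L. -/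
open scoped Classical

open R0Algebra

namespace R0Algebra

variable {L : Type*} [R0Algebra L]

lemma my_neg_top : (neg (⊤ : L)) = ⊥ := by
  have h : neg (⊤ : L) ≤ neg (neg (⊥ : L)) := neg_antitone le_top
  rw [neg_neg] at h
  exact le_bot_iff.mp h

lemma my_imp_mono {x y z : L} (h : y ≤ z) : imp x y ≤ imp x z := by
  have h5 := R5 x y z
  rw [sup_eq_right.mpr h] at h5
  calc imp x y ≤ imp x y ⊔ imp x z := le_sup_left
    _ = imp x z := h5.symm

lemma my_imp_self (y : L) : imp y y = ⊤ := by
  have hy : y ≤ imp y y := by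
    have e1 : imp (⊤ : L) y = imp (neg y) (neg ⊤) := R1 ⊤ y
    rw [R2, my_neg_top] at e1
    have e2 : imp y y = imp (neg y) (neg y) := R1 y y
    have h := my_imp_mono (x := neg y) (bot_le : (⊥ : L) ≤ neg y)
    rw [← e1, ← e2] at h
    exact h
  have h6 := R6 (⊤ : L) y
  rw [R2, my_neg_top, bot_sup_eq, sup_eq_right.mpr hy] at h6
  exact h6

lemma my_imp_top (x : L) : imp x ⊤ = ⊤ := by
  have h := my_imp_mono (x := x) (le_top : x ≤ ⊤)
  rw [my_imp_self] at h
  exact top_unique h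

lemma my_imp_eq_top_of_le {x y : L} (h : x ≤ y) : imp x y = ⊤ := by
  have h' := my_imp_mono (x := x) h
  rw [my_imp_self] at h'
  exact top_unique h'

lemma my_R3le (x y z : L) : imp y z ≤ imp (imp x y) (imp x z) :=
  inf_eq_left.mp (R3 x y z)

end R0Algebra

theorem stmt_11 {L : Type*} [R0Algebra L] (k : ℝ) (hk0 : 0 ≤ k) (hk1 : k < 1)
    (μ : L → ℝ) (hμ0 : ∀ x, 0 ≤ μ x) (hμ1 : ∀ x, μ x ≤ 1)
    (h : IsFuzzyFatedFilterQk μ k) :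
    ∀ x y z : L,
      min (min (μ (imp x (imp y z))) (μ (imp x y))) ((1 - k) / 2) ≤ μ (imp x z) := by
  intro x y z
  have hcpos : (0 : ℝ) < (1 - k) / 2 := by linarith
  have hc1 : (1 - k) / 2 ≤ 1 := by linarith
  -- μ(⊤) is large
  have Mtop : ∀ a : L, min (μ a) ((1 - k) / 2) ≤ μ (⊤ : L) := by
    intro a
    rcases le_or_gt (min (μ a) ((1 - k) / 2)) 0 with h0 | h0
    · exact h0.trans (hμ0 ⊤)
    · have ht1 : min (μ a) ((1 - k) / 2) ≤ 1 := (min_le_right _ _).trans hc1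
      rcases h.1 a (min (μ a) ((1 - k) / 2)) ⟨h0, ht1⟩ (min_le_left _ _) with h' | h'
      · exact h'
      · have hr := min_le_right (μ a) ((1 - k) / 2)
        linarith
  -- the fated-filter property in real-valued form
  have Fated : ∀ X Y a : L,
      min (min (μ a) (μ (imp a (imp (imp X Y) X)))) ((1 - k) / 2) ≤ μ X := by
    intro X Y a
    set t := min (min (μ a) (μ (imp a (imp (imp X Y) X)))) ((1 - k) / 2) with htdef
    rcases le_or_gt t 0 with h0 | h0
    · exact h0.trans (hμ0 X)
    · have ht1 : t ≤ 1 := (min_le_right _ _).trans hc1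
      have hta : t ≤ μ a := (min_le_left _ _).trans (min_le_left _ _)
      have htb : t ≤ μ (imp a (imp (imp X Y) X)) :=
        (min_le_left _ _).trans (min_le_right _ _)
      rcases h.2 X a Y t t ⟨h0, ht1⟩ ⟨h0, ht1⟩ htb hta with h' | h'
      · rw [min_self] at h'; exact h'
      · rw [min_self] at h'
        have hr : t ≤ (1 - k) / 2 := min_le_right _ _
        linarith
  -- modus ponens
  have MP : ∀ a b : L, min (min (μ a) (μ (imp a b))) ((1 - k) / 2) ≤ μ b := by
    intro a b
    have hf := Fated b ⊤ a
    rwa [my_imp_top, R2] at hf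
  -- monotonicity along ⊤-implications
  have MonoT : ∀ a b : L, imp a b = ⊤ → min (μ a) ((1 - k) / 2) ≤ μ b := by
    intro a b hab
    have h1 := MP a b
    rw [hab] at h1
    have h2 := Mtop a
    exact (le_min (le_min (min_le_left _ _) h2) (min_le_right _ _)).trans h1
  -- algebraic facts
  have T1 : imp (imp x (imp y z)) (imp (imp x y) (imp x (imp x z))) = ⊤ := by
    rw [R4 x y z]
    exact my_imp_eq_top_of_le (my_R3le x y (imp x z))
  have T2 : imp (imp x (imp x z)) (imp (imp (imp x z) z) (imp x z)) = ⊤ := by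
    rw [R4 (imp x (imp x z)) (imp (imp x z) z) (imp x z)]
    exact my_imp_eq_top_of_le (my_R3le x (imp x z) z)
  -- combine
  set A := imp x (imp y z) with hA
  set B := imp x y with hB
  set X := imp x z with hX
  set D := imp x X with hD
  set m := min (min (μ A) (μ B)) ((1 - k) / 2) with hm
  have hmc : m ≤ (1 - k) / 2 := min_le_right _ _
  have hmA : m ≤ μ A := (min_le_left _ _).trans (min_le_left _ _)
  have hmB : m ≤ μ B := (min_le_left _ _).trans (min_le_right _ _)
  have S1 : m ≤ μ (imp B D) :=
    (le_min hmA hmc).trans (MonoT A (imp B D) T1)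
  have S2 : m ≤ μ D :=
    (le_min (le_min hmB S1) hmc).trans (MP B D)
  have S3 : m ≤ μ (⊤ : L) := (le_min S2 hmc).trans (Mtop D)
  have S4 := Fated X z D
  rw [T2] at S4
  exact (le_min (le_min S2 S3) hmc).trans S4
end

section
/- Let L be an R₀-algebra and k ∈ [0,1). Every (∈,∈∨q_k)-fuzzy fated filter μ of L satisfies μ(x) ≥ min{μ((x→y)→x), (1−k)/2} for all x, y ∈ L. -/
open scoped Classical

open R0Algebra

theorem stmt_12 {L : Type*} [R0Algebra L] (k : ℝ) (hk0 : 0 ≤ k) (hk1 : k < 1)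
    (μ : L → ℝ) (hμ0 : ∀ x, 0 ≤ μ x) (hμ1 : ∀ x, μ x ≤ 1)
    (h : IsFuzzyFatedFilterQk μ k) :
    ∀ x y : L, min (μ (imp (imp x y) x)) ((1 - k) / 2) ≤ μ x := by
  intro x y
  set t := min (μ (imp (imp x y) x)) ((1 - k) / 2) with ht_def
  by_cases htpos : 0 < t
  · have ht1 : t ≤ 1 := le_trans (min_le_right _ _) (by linarith)
    have htI : t ∈ Set.Ioc (0 : ℝ) 1 := ⟨htpos, ht1⟩
    have htμ : t ≤ μ (imp (imp x y) x) := min_le_left _ _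
    have htk : t ≤ (1 - k) / 2 := min_le_right _ _
    have htop : t ≤ μ (⊤ : L) := by
      rcases h.1 (imp (imp x y) x) t htI htμ with h1 | h1
      · exact h1
      · linarith
    have h2 := h.2 x ⊤ y t t htI htI (by rwa [R2]) htop
    rw [min_self] at h2
    rcases h2 with h2 | h2
    · exact h2
    · linarith
  · push_neg at htpos
    exact le_trans htpos (hμ0 x)
end

section
/- Let L be an R₀-algebra, k ∈ [0,1), and F a fated filter of L. Let t₁ ∈ [(1−k)/2, 1] and t₂ ∈ (0, (1−k)/2). Then the fuzzy subset μ of L defined by μ(x) = t₁ if x ∈ F and μ(x) = t₂ otherwise is an (∈,∈∨q_k)-fuzzy fated filter of L. -/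
open scoped Classical

open R0Algebra

theorem stmt_13 {L : Type*} [R0Algebra L] (k : ℝ) (hk0 : 0 ≤ k) (hk1 : k < 1)
    (F : Set L) (hF : IsFatedFilter F)
    (t₁ t₂ : ℝ) (ht₁ : t₁ ∈ Set.Icc ((1 - k) / 2) 1) (ht₂ : t₂ ∈ Set.Ioo (0 : ℝ) ((1 - k) / 2)) :
    IsFuzzyFatedFilterQk (fun x => if x ∈ F then t₁ else t₂) k := by
  obtain ⟨h1F, h2F⟩ := hF
  obtain ⟨ht₁l, ht₁r⟩ := ht₁
  obtain ⟨ht₂l, ht₂r⟩ := ht₂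
  have htop : (fun x => if x ∈ F then t₁ else t₂) (⊤ : L) = t₁ := by simp [h1F]
  constructor
  · intro x t ht hxt
    rw [htop]
    by_cases h : t ≤ t₁
    · exact Or.inl h
    · right; push_neg at h; linarith
  · intro x a y t s ht hs h1 h2
    by_cases hx : x ∈ F
    · simp only [hx, if_true]
      by_cases h : min t s ≤ t₁
      · exact Or.inl h
      · right; push_neg at h; linarith
    · left
      simp only [hx, if_false]
      by_contra h
      push_neg at h
      have hts : t₂ < t := lt_of_lt_of_le h (min_le_left _ _)
      have hss : t₂ < s := lt_of_lt_of_le h (min_le_right _ _)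
      have haF : a ∈ F := by
        by_contra ha
        simp only [ha, if_false] at h2
        linarith
      have himp : imp a (imp (imp x y) x) ∈ F := by
        by_contra hi
        simp only [hi, if_false] at h1
        linarith
      exact hx (h2F x y a haF himp)
end

section
/- Let L be an R₀-algebra and k ∈ [0,1). If μ is an (∈,∈∨q_k)-fuzzy fated filter of L, then for every t ∈ ((1−k)/2, 1], the set Q_k(μ;t) is either empty or a fated filter of L. -/
open scoped Classical

open R0Algebra

theorem stmt_14 {L : Type*} [R0Algebra L] (k : ℝ) (hk0 : 0 ≤ k) (hk1 : k < 1)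
    (μ : L → ℝ) (hμ0 : ∀ x, 0 ≤ μ x) (hμ1 : ∀ x, μ x ≤ 1)
    (h : IsFuzzyFatedFilterQk μ k) :
    ∀ t ∈ Set.Ioc ((1 - k) / 2) (1 : ℝ),
      {x : L | 1 < μ x + t + k} = ∅ ∨ IsFatedFilter {x : L | 1 < μ x + t + k} := by
  intro t ht
  obtain ⟨ht0, ht1⟩ := ht
  by_cases hQ : {x : L | 1 < μ x + t + k} = ∅
  · exact Or.inl hQ
  right
  constructor
  · obtain ⟨x, hx⟩ := Set.nonempty_iff_ne_empty.mpr hQ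
    simp only [Set.mem_setOf_eq] at hx ⊢
    by_cases hxk : 1 < t + k
    · linarith [hμ0 (⊤ : L)]
    · have hμx : 0 < μ x := by linarith
      have hm0 : 0 < min (μ x) ((1-k)/2) := lt_min hμx (by linarith)
      have hm1 : min (μ x) ((1-k)/2) ≤ 1 := le_trans (min_le_right _ _) (by linarith)
      have h1 := h.1 x (min (μ x) ((1-k)/2)) ⟨hm0, hm1⟩ (min_le_left _ _)
      have hμtop : min (μ x) ((1-k)/2) ≤ μ (⊤ : L) := by
        rcases h1 with h1 | h1
        · exact h1
        · by_contra hc; push_neg at hc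
          have := min_le_right (μ x) ((1-k)/2)
          linarith
      rcases min_cases (μ x) ((1-k)/2) with ⟨he, _⟩ | ⟨he, _⟩ <;> rw [he] at hμtop <;> linarith
  · intro x y a ha hb
    simp only [Set.mem_setOf_eq] at ha hb ⊢
    by_cases hxk : 1 < t + k
    · linarith [hμ0 x]
    · have hμa : 0 < μ a := by linarith
      have hμb : 0 < μ (imp a (imp (imp x y) x)) := by linarith
      have hm0 : 0 < min (μ a) (min (μ (imp a (imp (imp x y) x))) ((1-k)/2)) :=
        lt_min hμa (lt_min hμb (by linarith))
      have hm1 : min (μ a) (min (μ (imp a (imp (imp x y) x))) ((1-k)/2)) ≤ 1 :=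
        le_trans (min_le_right _ _) (le_trans (min_le_right _ _) (by linarith))
      have h2 := h.2 x a y _ _ ⟨hm0, hm1⟩ ⟨hm0, hm1⟩
        (le_trans (min_le_right _ _) (min_le_left _ _)) (min_le_left _ _)
      rw [min_self] at h2
      have hμx : min (μ a) (min (μ (imp a (imp (imp x y) x))) ((1-k)/2)) ≤ μ x := by
        rcases h2 with h2 | h2
        · exact h2
        · by_contra hc; push_neg at hc
          have := le_trans (min_le_right (μ a) _) (min_le_right (μ (imp a (imp (imp x y) x))) ((1-k)/2))
          linarith
      rcases min_cases (μ a) (min (μ (imp a (imp (imp x y) x))) ((1-k)/2)) with ⟨he, _⟩ | ⟨he, _⟩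
      · rw [he] at hμx; linarith
      · rw [he] at hμx
        rcases min_cases (μ (imp a (imp (imp x y) x))) ((1-k)/2) with ⟨he2, _⟩ | ⟨he2, _⟩ <;>
          rw [he2] at hμx <;> linarith
end

section
/- Let L be an R₀-algebra and k ∈ [0,1). If μ is a strong (∈,∈∨q_k)-fuzzy fated filter of L, then for every t ∈ ((1−k)/2, 1], the set Q_k(μ;t) is either empty or a fated filter of L. -/
open scoped Classical

open R0Algebra

theorem stmt_15 {L : Type*} [R0Algebra L] (k : ℝ) (hk0 : 0 ≤ k) (hk1 : k < 1)
    (μ : L → ℝ) (hμ0 : ∀ x, 0 ≤ μ x) (hμ1 : ∀ x, μ x ≤ 1)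
    (h : IsStrongFuzzyFatedFilterQk μ k) :
    ∀ t ∈ Set.Ioc ((1 - k) / 2) (1 : ℝ),
      {x : L | 1 < μ x + t + k} = ∅ ∨ IsFatedFilter {x : L | 1 < μ x + t + k} := by
  intro t ht
  obtain ⟨ht0, ht1⟩ := ht
  by_cases hQ : {x : L | 1 < μ x + t + k} = ∅
  · exact Or.inl hQ
  · right
    obtain ⟨x₀, hx₀⟩ := Set.nonempty_iff_ne_empty.mpr hQ
    have htpos : 0 < t := lt_of_le_of_lt (by linarith) ht0
    constructor
    · exact Set.mem_setOf.mpr (lt_of_lt_of_le hx₀ (by linarith [h.1 x₀]))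
    · intro x y a ha hb
      by_cases hkt : 1 < t + k
      · exact Set.mem_setOf.mpr (by linarith [hμ0 x])
      · push_neg at hkt
        set t₀ : ℝ := min (min (μ (imp a (imp (imp x y) x))) (μ a)) t with ht₀def
        have hμb : 1 - t - k < μ (imp a (imp (imp x y) x)) := by
          have := Set.mem_setOf.mp hb; linarith
        have hμa : 1 - t - k < μ a := by
          have := Set.mem_setOf.mp ha; linarith
        have hr : 1 - t - k < t := by linarith
        have ht₀r : 1 - t - k < t₀ := by
          simp only [ht₀def, lt_min_iff]; exact ⟨⟨hμb, hμa⟩, hr⟩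
        have ht₀pos : 0 < t₀ := lt_of_le_of_lt (by linarith) ht₀r
        have ht₀1 : t₀ ≤ 1 := le_trans (min_le_right _ _) ht1
        have h1 : t₀ ≤ μ (imp a (imp (imp x y) x)) :=
          le_trans (min_le_left _ _) (min_le_left _ _)
        have h2 : t₀ ≤ μ a := le_trans (min_le_left _ _) (min_le_right _ _)
        have ht₀t : t₀ ≤ t := min_le_right _ _
        have := h.2 x a y t₀ t₀ ⟨ht₀pos, ht₀1⟩ ⟨ht₀pos, ht₀1⟩ h1 h2
        rw [min_self] at this
        rcases this with hle | hlt
        · exact Set.mem_setOf.mpr (by linarith)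
        · exact Set.mem_setOf.mpr (by linarith)
end

section
/- Let L be an R₀-algebra, k ∈ [0,1), and μ a fuzzy subset of L. Then μ is an (∈,∈∨q_k)-fuzzy fated filter of L if and only if for every t ∈ (0,1], the set [μ]_t^k is either empty or a fated filter of L. -/
open scoped Classical

open R0Algebra

theorem stmt_16 {L : Type*} [R0Algebra L] (k : ℝ) (hk0 : 0 ≤ k) (hk1 : k < 1)
    (μ : L → ℝ) (hμ0 : ∀ x, 0 ≤ μ x) (hμ1 : ∀ x, μ x ≤ 1) :
    IsFuzzyFatedFilterQk μ k ↔
      ∀ t ∈ Set.Ioc (0 : ℝ) 1,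
        {x : L | t ≤ μ x ∨ 1 < μ x + t + k} = ∅ ∨
          IsFatedFilter {x : L | t ≤ μ x ∨ 1 < μ x + t + k} := by
  constructor
  · rintro ⟨h1, h2⟩ t ht
    by_cases hne : {x : L | t ≤ μ x ∨ 1 < μ x + t + k} = ∅
    · exact Or.inl hne
    right
    obtain ⟨x0, hx0⟩ := Set.nonempty_iff_ne_empty.mpr hne
    have key : 1 < t + k ∨ ∀ z : L, (t ≤ μ z ∨ 1 < μ z + t + k) →
        min t (μ z) ∈ Set.Ioc (0:ℝ) 1 ∧ (min t (μ z) = t ∨ 1 - t - k < min t (μ z)) := by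
      by_cases htk : 1 < t + k
      · exact Or.inl htk
      push_neg at htk
      right
      intro z hz
      rcases le_total t (μ z) with hc | hc
      · exact ⟨⟨lt_min ht.1 (lt_of_lt_of_le ht.1 hc), le_trans (min_le_left _ _) ht.2⟩,
          Or.inl (min_eq_left hc)⟩
      · rcases hz with hz | hz
        · exact ⟨⟨lt_min ht.1 (lt_of_lt_of_le ht.1 hz), le_trans (min_le_left _ _) ht.2⟩,
            Or.inl (min_eq_left hz)⟩
        · have hlb : 1 - t - k < μ z := by linarith
          refine ⟨⟨lt_min ht.1 (by linarith), le_trans (min_le_left _ _) ht.2⟩, Or.inr ?_⟩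
          rw [min_eq_right hc]; exact hlb
    constructor
    · -- ⊤ ∈ S
      rcases key with htk | key
      · exact Or.inr (by nlinarith [hμ0 (⊤ : L)])
      obtain ⟨ht', ht''⟩ := key x0 hx0
      rcases h1 x0 (min t (μ x0)) ht' (min_le_right _ _) with h | h
      · rcases ht'' with h' | h'
        · left; rw [h'] at h; exact h
        · right
          have : 1 - t - k < μ (⊤ : L) := lt_of_lt_of_le h' h
          linarith
      · right
        have hm : min t (μ x0) ≤ t := min_le_left _ _
        linarith
    · intro x y a ha hb
      rcases key with htk | key
      · exact Or.inr (by nlinarith [hμ0 x])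
      set b := imp a (imp (imp x y) x) with hbdef
      obtain ⟨hb1, hb2⟩ := key b hb
      obtain ⟨ha1, ha2⟩ := key a ha
      rcases h2 x a y (min t (μ b)) (min t (μ a)) hb1 ha1 (min_le_right _ _)
          (min_le_right _ _) with h | h
      · rcases le_total (min t (μ b)) (min t (μ a)) with hc | hc
        · rw [min_eq_left hc] at h
          rcases hb2 with h' | h'
          · left; rw [h'] at h; exact h
          · right; linarith
        · rw [min_eq_right hc] at h
          rcases ha2 with h' | h'
          · left; rw [h'] at h; exact h
          · right; linarith
      · right
        have hm : min (min t (μ b)) (min t (μ a)) ≤ t :=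
          le_trans (min_le_left _ _) (min_le_left _ _)
        linarith
  · rintro h
    constructor
    · intro x t ht hx
      have hne : x ∈ {z : L | t ≤ μ z ∨ 1 < μ z + t + k} := Or.inl hx
      rcases h t ht with he | hf
      · exact absurd (he ▸ hne) (Set.notMem_empty x)
      · exact hf.1
    · intro x a y t s ht hs hb ha
      have hm : min t s ∈ Set.Ioc (0:ℝ) 1 :=
        ⟨lt_min ht.1 hs.1, le_trans (min_le_left _ _) ht.2⟩
      have ha' : a ∈ {z : L | min t s ≤ μ z ∨ 1 < μ z + min t s + k} :=
        Or.inl (le_trans (min_le_right _ _) ha)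
      have hb' : imp a (imp (imp x y) x) ∈
          {z : L | min t s ≤ μ z ∨ 1 < μ z + min t s + k} :=
        Or.inl (le_trans (min_le_left _ _) hb)
      rcases h (min t s) hm with he | hf
      · exact absurd (he ▸ ha') (Set.notMem_empty a)
      · exact hf.2 x y a ha' hb'
end

section
/- Let L be an R₀-algebra, k ∈ [0,1), and let F₀ ⊂ F₁ ⊂ ⋯ ⊂ F_n = L be a strictly increasing chain of fated filters of L. Then there exists an (∈,∈∨q_k)-fuzzy fated filter μ of L such that U(μ;(1−k)/2) = F₀ and the family of nonempty level sets U(μ;s) for s ∈ (0,(1−k)/2] is precisely {F₀, F₁, …, F_n}. -/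
open scoped Classical

open R0Algebra

/-
Take the step function μ x = max {c / (i + 1) : x ∈ F i} (and 0 if x lies in no F i), where
c = (1 - k)/2. Since the chain is increasing, the level set of μ at any s ∈ (0, c] is F j for the
largest j with s ≤ c / (j + 1), and it is empty for s > c. So every nonempty level set is a fated
filter, which makes μ an (∈,∈)-fuzzy fated filter, a fortiori an (∈,∈∨q_k)-one.
-/

namespace R0Algebra

variable {L : Type*} [R0Algebra L]

theorem IsFuzzyFatedFilterIn.isFuzzyFatedFilterQk {μ : L → ℝ} (hμ : IsFuzzyFatedFilterIn μ)
    (k : ℝ) : IsFuzzyFatedFilterQk μ k :=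
  ⟨fun x t ht htx => .inl (hμ.1 x t ht htx),
    fun x a y t s ht hs htb hsa => .inl (hμ.2 x a y t s ht hs htb hsa)⟩

theorem isFuzzyFatedFilterIn_of_isFatedFilter_setOf {μ : L → ℝ}
    (hμ : ∀ t ∈ Set.Ioc (0 : ℝ) 1, {x | t ≤ μ x}.Nonempty → IsFatedFilter {x | t ≤ μ x}) :
    IsFuzzyFatedFilterIn μ := by
  refine ⟨fun x t ht htx => (hμ t ht ⟨x, htx⟩).1, fun x a y t s ht hs htb hsa => ?_⟩
  have hts : min t s ∈ Set.Ioc (0 : ℝ) 1 := ⟨lt_min ht.1 hs.1, (min_le_left t s).trans ht.2⟩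
  have ha : a ∈ {x | min t s ≤ μ x} := (min_le_right t s).trans hsa
  exact (hμ _ hts ⟨a, ha⟩).2 x y a ha ((min_le_left t s).trans htb)

end R0Algebra

section StepFun

variable {α ι : Type*} [Fintype ι] [Nonempty ι]

noncomputable def stepFun (F : ι → Set α) (t : ι → ℝ) (x : α) : ℝ :=
  Finset.univ.sup' Finset.univ_nonempty fun i => if x ∈ F i then t i else 0

variable {F : ι → Set α} {t : ι → ℝ}

theorem stepFun_nonneg (ht : ∀ i, 0 ≤ t i) (x : α) : 0 ≤ stepFun F t x := by
  obtain ⟨i⟩ := ‹Nonempty ι›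
  refine Finset.le_sup'_of_le _ (Finset.mem_univ i) ?_
  split_ifs
  exacts [ht i, le_rfl]

theorem stepFun_le {b : ℝ} (hb : 0 ≤ b) (ht : ∀ i, t i ≤ b) (x : α) : stepFun F t x ≤ b := by
  refine Finset.sup'_le _ _ fun i _ => ?_
  split_ifs
  exacts [ht i, hb]

theorem le_stepFun_iff {s : ℝ} (hs : 0 < s) (x : α) :
    s ≤ stepFun F t x ↔ ∃ i, x ∈ F i ∧ s ≤ t i := by
  simp only [stepFun, Finset.le_sup'_iff, Finset.mem_univ, true_and]
  refine exists_congr fun i => ?_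
  split_ifs with hx
  · exact ⟨fun h => ⟨hx, h⟩, And.right⟩
  · exact ⟨fun h => absurd h hs.not_ge, fun h => absurd h.1 hx⟩

variable [LinearOrder ι]

theorem exists_setOf_le_stepFun_eq (hF : Monotone F) {s : ℝ} (hs : 0 < s) (h : ∃ i, s ≤ t i) :
    ∃ j, {x | s ≤ stepFun F t x} = F j := by
  obtain ⟨i₀, hi₀⟩ := h
  set S := Finset.univ.filter fun i => s ≤ t i
  have hS : S.Nonempty := ⟨i₀, by simpa [S] using hi₀⟩
  have hmax : s ≤ t (S.max' hS) := by simpa [S] using S.max'_mem hS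
  refine ⟨S.max' hS, Set.ext fun x => ?_⟩
  rw [Set.mem_ofPred_eq, le_stepFun_iff hs]
  exact ⟨fun ⟨i, hx, hi⟩ => hF (S.le_max' i (by simpa [S] using hi)) hx, fun hx => ⟨_, hx, hmax⟩⟩

theorem setOf_le_stepFun_eq (hF : Monotone F) (ht : StrictAnti t) {j : ι} (hj : 0 < t j) :
    {x | t j ≤ stepFun F t x} = F j := by
  ext x
  rw [Set.mem_ofPred_eq, le_stepFun_iff hj]
  exact ⟨fun ⟨i, hx, hi⟩ => hF (ht.le_iff_ge.mp hi) hx, fun hx => ⟨j, hx, le_rfl⟩⟩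

theorem isFuzzyFatedFilterIn_stepFun {L : Type*} [R0Algebra L] {F : ι → Set L}
    (hF : Monotone F) (hfated : ∀ i, IsFatedFilter (F i)) :
    IsFuzzyFatedFilterIn (stepFun F t) := by
  refine isFuzzyFatedFilterIn_of_isFatedFilter_setOf fun s hs ⟨x, hx⟩ => ?_
  obtain ⟨i, -, hi⟩ := (le_stepFun_iff hs.1 x).mp hx
  obtain ⟨j, hj⟩ := exists_setOf_le_stepFun_eq hF hs.1 ⟨i, hi⟩
  exact hj ▸ hfated j

end StepFun

theorem stmt_17_general {L : Type*} [R0Algebra L] (k : ℝ) (hk0 : 0 ≤ k) (hk1 : k < 1)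
    (n : ℕ) (F : Fin (n + 1) → Set L)
    (hfated : ∀ i, IsFatedFilter (F i))
    (hchain : ∀ i j : Fin (n + 1), i < j → F i ⊂ F j) :
    ∃ μ : L → ℝ, (∀ x, 0 ≤ μ x) ∧ (∀ x, μ x ≤ 1) ∧ IsFuzzyFatedFilterQk μ k ∧
      {x : L | (1 - k) / 2 ≤ μ x} = F 0 ∧
      {S : Set L | ∃ s ∈ Set.Ioc (0 : ℝ) ((1 - k) / 2),
          S = {x : L | s ≤ μ x} ∧ S.Nonempty} = Set.range F := by
  set c := (1 - k) / 2
  have hc : 0 < c := by simp only [c]; linarith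
  have hc1 : c ≤ 1 := by simp only [c]; linarith
  have hF : Monotone F := StrictMono.monotone hchain
  let t : Fin (n + 1) → ℝ := fun i => c / ((i : ℕ) + 1)
  have ht : StrictAnti t := fun i j hij =>
    div_lt_div_of_pos_left hc (by positivity) (by simpa using hij)
  have ht_pos : ∀ i, 0 < t i := fun i => by positivity
  have ht_le : ∀ i, t i ≤ c := fun i => div_le_self hc.le (by simp)
  have ht_zero : t 0 = c := by simp [t]
  refine ⟨stepFun F t, stepFun_nonneg fun i => (ht_pos i).le,
    stepFun_le zero_le_one fun i => (ht_le i).trans hc1,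
    (isFuzzyFatedFilterIn_stepFun hF hfated).isFuzzyFatedFilterQk k,
    ht_zero ▸ setOf_le_stepFun_eq hF ht (ht_pos 0), Set.ext fun S => ⟨?_, ?_⟩⟩
  · rintro ⟨s, hs, rfl, -⟩
    exact (exists_setOf_le_stepFun_eq hF hs.1 ⟨0, ht_zero ▸ hs.2⟩).imp fun _ => Eq.symm
  · rintro ⟨j, rfl⟩
    exact ⟨t j, ⟨ht_pos j, ht_le j⟩, (setOf_le_stepFun_eq hF ht (ht_pos j)).symm, ⊤, (hfated j).1⟩

theorem stmt_17 {L : Type*} [R0Algebra L] (k : ℝ) (hk0 : 0 ≤ k) (hk1 : k < 1)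
    (n : ℕ) (F : Fin (n + 1) → Set L)
    (hfated : ∀ i, IsFatedFilter (F i))
    (hchain : ∀ i j : Fin (n + 1), i < j → F i ⊂ F j)
    (hlast : F (Fin.last n) = Set.univ) :
    ∃ μ : L → ℝ, (∀ x, 0 ≤ μ x) ∧ (∀ x, μ x ≤ 1) ∧ IsFuzzyFatedFilterQk μ k ∧
      {x : L | (1 - k) / 2 ≤ μ x} = F 0 ∧
      {S : Set L | ∃ s ∈ Set.Ioc (0 : ℝ) ((1 - k) / 2),
          S = {x : L | s ≤ μ x} ∧ S.Nonempty} = Set.range F :=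
  stmt_17_general k hk0 hk1 n F hfated hchain
end

section
/- Let L be an R₀-algebra, k ∈ [0,1), and let Λ ⊆ (0, (1−k)/2] be an index set with a family {F_t : t ∈ Λ} of fated filters of L such that L = ⋃_{t∈Λ} F_t and, for all s, t ∈ Λ, s < t if and only if F_t ⊊ F_s. Then the fuzzy subset μ of L defined by μ(x) = sup{t ∈ Λ : x ∈ F_t} is an (∈,∈∨q_k)-fuzzy fated filter of L. -/
open scoped Classical

open R0Algebra

theorem stmt_18 {L : Type*} [R0Algebra L] (k : ℝ) (hk0 : 0 ≤ k) (hk1 : k < 1)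
    (Λ : Set ℝ) (hΛ : Λ ⊆ Set.Ioc (0 : ℝ) ((1 - k) / 2))
    (F : ℝ → Set L) (hfated : ∀ t ∈ Λ, IsFatedFilter (F t))
    (hcover : (⋃ t ∈ Λ, F t) = Set.univ)
    (hmono : ∀ s ∈ Λ, ∀ t ∈ Λ, (s < t ↔ F t ⊂ F s)) :
    IsFuzzyFatedFilterQk (fun x => sSup {t | t ∈ Λ ∧ x ∈ F t}) k := by
  have hbdd : ∀ (S : Set ℝ), S ⊆ Λ → BddAbove S := fun S hS =>
    ⟨(1 - k) / 2, fun r hr => (hΛ (hS hr)).2⟩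
  have hsub : ∀ r1 ∈ Λ, ∀ r2 ∈ Λ, r1 ≤ r2 → F r2 ⊆ F r1 := by
    intro r1 h1 r2 h2 hle
    rcases eq_or_lt_of_le hle with rfl | hlt
    · exact subset_rfl
    · exact ((hmono r1 h1 r2 h2).1 hlt).subset
  constructor
  · intro x t ht htμ
    left
    have hne : {r | r ∈ Λ ∧ x ∈ F r}.Nonempty := by
      by_contra h
      rw [Set.not_nonempty_iff_eq_empty] at h
      simp only [h, Real.sSup_empty] at htμ
      linarith [ht.1]
    refine le_trans htμ (csSup_le_csSup (hbdd _ fun r hr => hr.1) hne ?_)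
    intro r hr
    exact ⟨hr.1, (hfated r hr.1).1⟩
  · intro x a y t s ht hs htμ hsμ
    simp only at htμ hsμ
    left
    set A := {r | r ∈ Λ ∧ imp a (imp (imp x y) x) ∈ F r} with hA
    set B := {r | r ∈ Λ ∧ a ∈ F r} with hB
    have hAne : A.Nonempty := by
      by_contra h
      rw [Set.not_nonempty_iff_eq_empty] at h
      simp only [h, Real.sSup_empty] at htμ
      linarith [ht.1]
    have hBne : B.Nonempty := by
      by_contra h
      rw [Set.not_nonempty_iff_eq_empty] at h
      simp only [h, Real.sSup_empty] at hsμ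
      linarith [hs.1]
    refine le_of_forall_pos_le_add ?_
    intro ε hε
    obtain ⟨r1, hr1, hr1gt⟩ := exists_lt_of_lt_csSup hAne
      (show sSup A - ε < sSup A by linarith)
    obtain ⟨r2, hr2, hr2gt⟩ := exists_lt_of_lt_csSup hBne
      (show sSup B - ε < sSup B by linarith)
    have hminΛ : min r1 r2 ∈ Λ := by
      rcases le_total r1 r2 with h | h
      · rw [min_eq_left h]; exact hr1.1
      · rw [min_eq_right h]; exact hr2.1
    have h1 : imp a (imp (imp x y) x) ∈ F (min r1 r2) :=
      hsub _ hminΛ _ hr1.1 (min_le_left _ _) hr1.2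
    have h2 : a ∈ F (min r1 r2) :=
      hsub _ hminΛ _ hr2.1 (min_le_right _ _) hr2.2
    have hx : x ∈ F (min r1 r2) := (hfated _ hminΛ).2 x y a h2 h1
    have hle : min r1 r2 ≤ sSup {r | r ∈ Λ ∧ x ∈ F r} :=
      le_csSup (hbdd _ fun r hr => hr.1) ⟨hminΛ, hx⟩
    have h3 : min t s - ε < min r1 r2 := by
      apply lt_min
      · calc min t s - ε ≤ t - ε := by linarith [min_le_left t s]
          _ ≤ sSup A - ε := by linarith
          _ < r1 := hr1gt
      · calc min t s - ε ≤ s - ε := by linarith [min_le_right t s]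
          _ ≤ sSup B - ε := by linarith
          _ < r2 := hr2gt
    linarith
end
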